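/- arXiv:1908.02250 — 2 statements merged into one kernel-verified Lean document; each statement's English description precedes it below -/
import Mathlib

section
/- For all nonnegative integers n, k with n ≤ 2^k, τ(n/2^k) = 1 + n/2^k − (1 + D(n + 2^k − 1))/2^k. -/
/-- f m = (#1 digits) - (#0 digits) in the binary expansion of m. -/
def f (m : ℕ) : ℤ :=
  2 * ((Nat.digits 2 m).count 1 : ℤ) - ((Nat.digits 2 m).length : ℤ)

/-- Cumulated deficient binary digit sum (OEIS A268289), D 0 = 0. -/
def D (n : ℕ) : ℤ := ∑ m ∈ Finset.Icc 1 n, f m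

/-- Distance from y to the nearest integer. -/
noncomputable def s (y : ℝ) : ℝ := |y - round y|

/-- The Takagi function. -/
noncomputable def τ (x : ℝ) : ℝ := ∑' n : ℕ, s (2 ^ n * x) / 2 ^ n

/-!
The Takagi function satisfies `τ x = s x + τ (2 * x) / 2` and `τ (x + 1) = τ x`. By induction on
`k`, the increment of `τ` from `n / 2 ^ k` to `(n + 1) / 2 ^ k` (for `n < 2 ^ k`) is
`(1 - f (n + 2 ^ k)) / 2 ^ k`: going from `k` to `k + 1` inserts a binary digit `0` into
`n + 2 ^ k` on the left half of `[0, 1]`, where `s` has slope `1`, and a digit `1` on the right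
half, where `s` has slope `-1`. Summing the increments expresses `τ (n / 2 ^ k)` through
`∑ m < n, f (m + 2 ^ k) = D (n + 2 ^ k - 1) - D (2 ^ k - 1)`, and the case `n = 2 ^ k`, where
`τ 1 = τ 0 = 0`, gives `D (2 ^ k - 1) = 2 ^ k - 1` by induction on `k`.
-/

open Finset

lemma Nat.digits_add_base_pow {b n k : ℕ} (hb : 1 < b) (hn : n < b ^ k) :
    b.digits (n + b ^ k) = b.digits n ++ List.replicate (k - (b.digits n).length) 0 ++ [1] := by
  have hlen : (b.digits n).length ≤ k := (Nat.digits_length_le_iff hb n).2 hn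
  rw [← Nat.digits_of_lt b 1 one_ne_zero hb, Nat.digits_append_zeroes_append_digits hb one_pos,
    Nat.add_sub_cancel' hlen, mul_one]

lemma count_one_digits_two_add_two_pow {n k : ℕ} (hn : n < 2 ^ k) :
    (Nat.digits 2 (n + 2 ^ k)).count 1 = (Nat.digits 2 n).count 1 + 1 := by
  rw [Nat.digits_add_base_pow one_lt_two hn]
  simp [List.count_replicate]

lemma f_add_two_pow {n k : ℕ} (hn : n < 2 ^ k) :
    f (n + 2 ^ k) = 2 * (Nat.digits 2 n).count 1 + 1 - k := by
  have hlen : (Nat.digits 2 n).length ≤ k := (Nat.digits_length_le_iff one_lt_two n).2 hn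
  rw [f, count_one_digits_two_add_two_pow hn, Nat.digits_add_base_pow one_lt_two hn]
  simp only [List.length_append, List.length_replicate, List.length_singleton]
  push_cast [Nat.add_sub_cancel' hlen]
  ring

lemma f_add_two_pow_succ {n k : ℕ} (hn : n < 2 ^ k) : f (n + 2 ^ (k + 1)) = f (n + 2 ^ k) - 1 := by
  rw [f_add_two_pow hn, f_add_two_pow (hn.trans (Nat.pow_lt_pow_right one_lt_two k.lt_succ_self))]
  push_cast
  ring

lemma f_add_two_pow_add_two_pow_succ {n k : ℕ} (hn : n < 2 ^ k) :
    f (n + 2 ^ k + 2 ^ (k + 1)) = f (n + 2 ^ k) + 1 := by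
  have hn' : n + 2 ^ k < 2 ^ (k + 1) := by rw [pow_succ]; omega
  rw [f_add_two_pow hn, f_add_two_pow hn', count_one_digits_two_add_two_pow hn]
  push_cast
  ring

lemma s_add_intCast (y : ℝ) (m : ℤ) : s (y + m) = s y := by
  rw [s, s, round_add_intCast, Int.cast_add, add_sub_add_right_eq_sub]

lemma s_eq_min {y : ℝ} (h0 : 0 ≤ y) (h1 : y ≤ 1) : s y = min y (1 - y) := by
  rcases h1.lt_or_eq with h1 | rfl
  · rw [s, abs_sub_round_eq_min, Int.fract_eq_self.2 ⟨h0, h1⟩]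
  · simp [s]

lemma summable_takagi (x : ℝ) : Summable fun n : ℕ => s (2 ^ n * x) / 2 ^ n := by
  refine .of_nonneg_of_le (fun n => by unfold s; positivity) (fun n => ?_) summable_geometric_two
  rw [div_le_iff₀ (by positivity), one_div_pow, one_div_mul_cancel (by positivity)]
  exact (abs_sub_round _).trans (by norm_num)

lemma tau_eq_s_add_tau_two_mul (x : ℝ) : τ x = s x + τ (2 * x) / 2 := by
  rw [τ, (summable_takagi x).tsum_eq_zero_add, τ, ← tsum_div_const]
  simp only [pow_zero, one_mul, div_one, pow_succ, div_div, mul_assoc, mul_left_comm _ (2 : ℝ),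
    mul_comm _ (2 : ℝ)]

lemma tau_add_intCast (x : ℝ) (m : ℤ) : τ (x + m) = τ x := by
  refine tsum_congr fun n => ?_
  have : (2 : ℝ) ^ n * (x + m) = 2 ^ n * x + ((2 ^ n * m : ℤ) : ℝ) := by push_cast; ring
  rw [this, s_add_intCast]

lemma tau_zero : τ 0 = 0 := by
  simp [τ, s]

lemma tau_one : τ 1 = 0 := by
  simpa [tau_zero] using tau_add_intCast 0 1

lemma tau_div_two_pow_succ (x : ℝ) (k : ℕ) :
    τ (x / 2 ^ (k + 1)) = s (x / 2 ^ (k + 1)) + τ (x / 2 ^ k) / 2 := by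
  rw [tau_eq_s_add_tau_two_mul, pow_succ, ← div_div, mul_div_cancel₀ _ two_ne_zero]

lemma tau_add_two_pow_div_two_pow (x : ℝ) (k : ℕ) : τ ((x + 2 ^ k) / 2 ^ k) = τ (x / 2 ^ k) := by
  rw [add_div, div_self (by positivity)]
  exact_mod_cast tau_add_intCast (x / 2 ^ k) 1

lemma s_div_two_pow_succ_of_le {x : ℝ} {k : ℕ} (h0 : 0 ≤ x) (h : x ≤ 2 ^ k) :
    s (x / 2 ^ (k + 1)) = x / 2 ^ (k + 1) := by
  have hy : x / 2 ^ (k + 1) ≤ 1 / 2 := by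
    rw [div_le_iff₀ (by positivity), pow_succ]
    linarith
  rw [s_eq_min (by positivity) (by linarith), min_eq_left (by linarith)]

lemma s_div_two_pow_succ_of_ge {x : ℝ} {k : ℕ} (h : 2 ^ k ≤ x) (h1 : x ≤ 2 ^ (k + 1)) :
    s (x / 2 ^ (k + 1)) = 1 - x / 2 ^ (k + 1) := by
  have hy : 1 / 2 ≤ x / 2 ^ (k + 1) := by
    rw [le_div_iff₀ (by positivity), pow_succ]
    linarith
  have hy1 : x / 2 ^ (k + 1) ≤ 1 := (div_le_one (by positivity)).2 h1
  rw [s_eq_min (by linarith) hy1, min_eq_right (by linarith)]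

lemma tau_succ_div_two_pow {n k : ℕ} (hn : n < 2 ^ k) :
    τ ((n + 1) / 2 ^ k) = τ (n / 2 ^ k) + (1 - f (n + 2 ^ k)) / 2 ^ k := by
  induction k generalizing n with
  | zero =>
    obtain rfl : n = 0 := by simpa using hn
    simp [tau_zero, tau_one, f]
  | succ k ih =>
    rw [tau_div_two_pow_succ, tau_div_two_pow_succ]
    rcases lt_or_ge n (2 ^ k) with hlo | hhi
    · have hn' : (n : ℝ) + 1 ≤ 2 ^ k := by exact_mod_cast hlo
      rw [s_div_two_pow_succ_of_le (by positivity) hn', s_div_two_pow_succ_of_le (by positivity)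
        (by linarith), ih hlo, f_add_two_pow_succ hlo]
      push_cast
      field_simp
      ring
    · obtain ⟨r, rfl⟩ := Nat.exists_eq_add_of_le' hhi
      have hr : r < 2 ^ k := by rw [pow_succ] at hn; omega
      have hr' : (r : ℝ) + 1 ≤ 2 ^ k := by exact_mod_cast hr
      have hcast : ((r + 2 ^ k : ℕ) : ℝ) = r + 2 ^ k := by push_cast; ring
      have hcast1 : ((r + 2 ^ k : ℕ) : ℝ) + 1 = r + 1 + 2 ^ k := by push_cast; ring
      rw [hcast1, hcast, s_div_two_pow_succ_of_ge (by linarith) (by rw [pow_succ]; linarith),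
        s_div_two_pow_succ_of_ge (by linarith) (by rw [pow_succ]; linarith),
        tau_add_two_pow_div_two_pow, tau_add_two_pow_div_two_pow, ih hr,
        f_add_two_pow_add_two_pow_succ hr]
      push_cast
      field_simp
      ring

lemma tau_natCast_div_two_pow {n k : ℕ} (hn : n ≤ 2 ^ k) :
    τ (n / 2 ^ k) = (n - ∑ m ∈ range n, f (m + 2 ^ k)) / 2 ^ k := by
  induction n with
  | zero => simp [tau_zero]
  | succ n ih =>
    rw [Nat.cast_succ, tau_succ_div_two_pow hn, ih (Nat.le_of_succ_le hn), sum_range_succ]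
    push_cast
    ring

lemma D_sub_one (N : ℕ) : D (N - 1) = ∑ m ∈ range N, f m := by
  rcases N with _ | N
  · simp [D]
  · rw [D, Nat.add_sub_cancel, sum_range_eq_add_Ico _ N.add_one_pos, Ico_add_one_right_eq_Icc]
    simp [f]

lemma D_add_two_pow_sub_one (n k : ℕ) :
    D (n + 2 ^ k - 1) = D (2 ^ k - 1) + ∑ m ∈ range n, f (m + 2 ^ k) := by
  rw [D_sub_one, D_sub_one, add_comm n, sum_range_add]
  simp only [add_comm (2 ^ k)]

lemma sum_range_two_pow_f_add_two_pow (k : ℕ) : ∑ m ∈ range (2 ^ k), f (m + 2 ^ k) = 2 ^ k := by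
  have h := tau_natCast_div_two_pow (le_refl (2 ^ k))
  rw [Nat.cast_pow, Nat.cast_ofNat, div_self (by positivity), tau_one, eq_comm,
    div_eq_zero_iff, sub_eq_zero] at h
  exact_mod_cast (h.resolve_right (by positivity)).symm

lemma D_two_pow_sub_one (k : ℕ) : D (2 ^ k - 1) = 2 ^ k - 1 := by
  induction k with
  | zero => simp [D]
  | succ k ih =>
    rw [pow_succ, mul_two, D_add_two_pow_sub_one, ih, sum_range_two_pow_f_add_two_pow]
    ring

theorem stmt_9 (n k : ℕ) (h : n ≤ 2 ^ k) :
    τ ((n : ℝ) / 2 ^ k) = 1 + (n : ℝ) / 2 ^ k - (1 + (D (n + 2 ^ k - 1) : ℝ)) / 2 ^ k := by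
  rw [tau_natCast_div_two_pow h, D_add_two_pow_sub_one, D_two_pow_sub_one]
  push_cast
  field_simp
  ring
end

section
/- For nonnegative integers n, k, m with n ≤ 2^k, D(2^(k+2m+1) + 2^k·(4^m − 1)/3 + n − 1) = 2^(k+2)·(4^m − 1)/3 + D(2^(k+1) + n − 1). -/
theorem f_add_two_pow_mul {H : ℕ} (hH : H ≠ 0) {r k : ℕ} (hr : r < 2 ^ k) :
    f (r + 2 ^ k * H) = f r + f H - k + (Nat.digits 2 r).length := by
  obtain ⟨z, hz⟩ := Nat.exists_eq_add_of_le ((Nat.digits_length_le_iff one_lt_two r).2 hr)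
  simp only [f]
  rw [hz, ← Nat.digits_append_zeroes_append_digits one_lt_two (Nat.pos_of_ne_zero hH)]
  simp only [List.count_append, List.length_append, List.count_replicate, List.length_replicate]
  push_cast
  ring

theorem f_zero : f 0 = 0 := by simp [f]

theorem f_one : f 1 = 1 := by simp [f]

theorem f_two : f 2 = 0 := by simp [f]

theorem f_two_mul_add_one (j : ℕ) : f (2 * j + 1) = f j + 1 := by
  rcases eq_or_ne j 0 with rfl | hj
  · simp [f_one, f_zero]
  · have h := f_add_two_pow_mul hj (r := 1) (k := 1) (by norm_num)
    rw [add_comm]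
    simpa [f_one] using h

theorem f_two_mul {j : ℕ} (hj : j ≠ 0) : f (2 * j) = f j - 1 := by
  simpa [f_zero] using f_add_two_pow_mul hj (r := 0) (k := 1) (by norm_num)

theorem f_four_mul {j : ℕ} (hj : j ≠ 0) : f (4 * j) = f j - 2 := by
  rw [show 4 * j = 2 * (2 * j) by ring, f_two_mul (by omega), f_two_mul hj]
  ring

theorem f_four_mul_add_one {j : ℕ} (hj : j ≠ 0) : f (4 * j + 1) = f j := by
  rw [show 4 * j = 2 * (2 * j) by ring, f_two_mul_add_one, f_two_mul hj]
  ring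

theorem D_add_one (n : ℕ) : D (n + 1) = D n + f (n + 1) :=
  Finset.sum_Icc_succ_top (by omega) f

theorem D_one : D 1 = 1 := by simp [D, f]

theorem D_of_ne_zero {n : ℕ} (hn : n ≠ 0) : D n = D (n - 1) + f n := by
  obtain ⟨m, rfl⟩ := Nat.exists_eq_succ_of_ne_zero hn
  exact D_add_one m

theorem D_two_mul_add_one (n : ℕ) : D (2 * n + 1) = 2 * D n + 1 := by
  induction n with
  | zero => simp [D, f]
  | succ n ih =>
    rw [show 2 * (n + 1) + 1 = 2 * n + 1 + 1 + 1 by ring, D_add_one, D_add_one, ih, D_add_one,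
      show 2 * n + 1 + 1 = 2 * (n + 1) by ring, f_two_mul_add_one, f_two_mul n.succ_ne_zero]
    ring

theorem D_two_pow_mul_sub_one {H : ℕ} (hH : H ≠ 0) (k : ℕ) :
    D (2 ^ k * H - 1) = 2 ^ k * (D (H - 1) + 1) - 1 := by
  induction k with
  | zero => simp
  | succ k ih =>
    have hpos : 0 < 2 ^ k * H := by positivity
    have h2 : 2 ^ (k + 1) * H = 2 * (2 ^ k * H) := by ring
    rw [show 2 ^ (k + 1) * H - 1 = 2 * (2 ^ k * H - 1) + 1 by omega,
      D_two_mul_add_one, ih, pow_succ]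
    ring

theorem D_four_mul {x : ℕ} (hx : x ≠ 0) : D (4 * x) = 4 * D (x - 1) + f x + 1 := by
  rw [D_of_ne_zero (by omega : 4 * x ≠ 0), show 4 * x - 1 = 2 ^ 2 * x - 1 from rfl,
    D_two_pow_mul_sub_one hx 2, f_four_mul hx]
  ring

theorem D_two_pow_mul_add_sub_one_sub_eq_of_f_eq {H H' : ℕ} (hH : H ≠ 0) (hH' : H' ≠ 0)
    (hf : f H = f H') {k n : ℕ} (hn : n ≤ 2 ^ k) :
    D (2 ^ k * H + n - 1) - D (2 ^ k * H - 1) = D (2 ^ k * H' + n - 1) - D (2 ^ k * H' - 1) := by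
  induction n with
  | zero => simp
  | succ n ih =>
    have hpos : 0 < 2 ^ k * H := by positivity
    have hpos' : 0 < 2 ^ k * H' := by positivity
    rw [show 2 ^ k * H + (n + 1) - 1 = 2 ^ k * H + n - 1 + 1 by omega,
      show 2 ^ k * H' + (n + 1) - 1 = 2 ^ k * H' + n - 1 + 1 by omega, D_add_one, D_add_one,
      show 2 ^ k * H + n - 1 + 1 = n + 2 ^ k * H by omega,
      show 2 ^ k * H' + n - 1 + 1 = n + 2 ^ k * H' by omega,
      f_add_two_pow_mul hH (by omega), f_add_two_pow_mul hH' (by omega), hf]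
    linarith [ih (by omega)]

-- Binary expansion `10(01)^m`, so `B m = 2 ^ (2 * m + 1) + (4 ^ m - 1) / 3`.
def B : ℕ → ℕ
  | 0 => 2
  | m + 1 => 4 * B m + 1

theorem B_ne_zero (m : ℕ) : B m ≠ 0 := by
  cases m <;> simp [B]

theorem three_mul_B_add_one (m : ℕ) : 3 * B m + 1 = 7 * 4 ^ m := by
  induction m with
  | zero => rfl
  | succ m ih => rw [B, pow_succ]; omega

theorem f_B (m : ℕ) : f (B m) = 0 := by
  induction m with
  | zero => simp [B, f]
  | succ m ih => rw [B, f_four_mul_add_one (B_ne_zero m), ih]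

theorem three_mul_D_B_sub_one (m : ℕ) : 3 * D (B m - 1) = 4 ^ (m + 1) - 1 := by
  induction m with
  | zero => simp [B, D_one]
  | succ m ih =>
    rw [B, Nat.add_sub_cancel, D_four_mul (B_ne_zero m), f_B, pow_succ]
    linarith

theorem stmt_16 (n k m : ℕ) (h : n ≤ 2 ^ k) :
    D (2 ^ (k + 2 * m + 1) + 2 ^ k * (4 ^ m - 1) / 3 + n - 1) =
      2 ^ (k + 2) * ((4 ^ m - 1 : ℤ)) / 3 + D (2 ^ (k + 1) + n - 1) := by
  have hB : 2 ^ (k + 2 * m + 1) + 2 ^ k * (4 ^ m - 1) / 3 = 2 ^ k * B m := by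
    have h3 := three_mul_B_add_one m
    have hdvd : 3 ∣ 4 ^ m - 1 := by simpa using Nat.sub_dvd_pow_sub_pow 4 1 m
    rw [Nat.mul_div_assoc _ hdvd, show (4 ^ m - 1) / 3 = B m - 2 * 4 ^ m by omega,
      show 2 ^ (k + 2 * m + 1) = 2 ^ k * (2 * 4 ^ m) by rw [pow_add, pow_add, pow_mul]; ring,
      ← mul_add]
    congr 1
    omega
  have hshift := D_two_pow_mul_add_sub_one_sub_eq_of_f_eq (B_ne_zero m) two_ne_zero
    (by rw [f_B, f_two]) h
  rw [D_two_pow_mul_sub_one (B_ne_zero m), D_two_pow_mul_sub_one two_ne_zero, ← pow_succ,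
    show 2 - 1 = 1 from rfl, D_one] at hshift
  have hdiv : 2 ^ (k + 2) * ((4 ^ m - 1 : ℤ)) = 3 * (2 ^ k * (D (B m - 1) - 1)) := by
    linear_combination (-2 ^ k : ℤ) * three_mul_D_B_sub_one m
  rw [hB, hdiv, Int.mul_ediv_cancel_left _ three_ne_zero]
  linarith
end
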